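/- Let A be a unital C*-algebra and let φ ∈ A*_+. Suppose that for every self-adjoint a ∈ A and every ε > 0 there exists a maximally mixed φ' ∈ A*_+ such that φ − φ' is positive and |φ(a) − φ'(a)| < ε. Then φ is maximally mixed. -/

import Mathlib

/-!
Conjugation by a unitary is an isometry of `A*`, so if `‖φ - φ'‖ ≤ ε` then every point of
`D_A(φ)` lies within `ε` of `D_A(φ')`; the weak*-closure causes no trouble because norm balls are
weak*-compact. Chasing `ψ ∈ D_A(φ)` to `ψ' ∈ D_A(φ')`, then `φ' ∈ D_A(ψ')` back to `D_A(ψ)`, shows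
that maximally mixed functionals form a norm-closed set. A positive functional has norm `φ(1)`,
so the hypothesis at `a = 1` puts `φ` in the norm closure of the maximally mixed functionals.
-/

open scoped ComplexOrder Pointwise

noncomputable section

variable (A : Type*) [CStarAlgebra A]

/-- The functional `uφu* : x ↦ φ (u * x * star u)`. -/
def conjF (u : A) (φ : A →L[ℂ] ℂ) : A →L[ℂ] ℂ :=
  φ.comp (ContinuousLinearMap.mulLeftRight ℂ A u (star u))

/-- The weak*-closure of a set of continuous linear functionals. -/
def wsClosure (S : Set (A →L[ℂ] ℂ)) : Set (A →L[ℂ] ℂ) :=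
  StrongDual.toWeakDual ⁻¹' closure (StrongDual.toWeakDual '' S)

/-- The Dixmier set `D_A(φ, V)`: the weak*-closed convex hull of `{uφu* : u ∈ V}`. -/
def DixF (V : Set A) (φ : A →L[ℂ] ℂ) : Set (A →L[ℂ] ℂ) :=
  wsClosure A (convexHull ℝ ((fun u => conjF A u φ) '' V))

/-- The Dixmier set `D_A(a, V)`: the norm-closed convex hull of `{uau* : u ∈ V}`. -/
def DixE (V : Set A) (a : A) : Set A :=
  closure (convexHull ℝ ((fun u => u * a * star u) '' V))

/-- The Dixmier set `D_A(φ)` (conjugation by the full unitary group `U(A)`). -/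
def Dix (φ : A →L[ℂ] ℂ) : Set (A →L[ℂ] ℂ) := DixF A (unitary A : Set A) φ

/-- A functional is maximally mixed if `φ ∈ D_A(ψ)` for every `ψ ∈ D_A(φ)`. -/
def MaxMixed (φ : A →L[ℂ] ℂ) : Prop := ∀ ψ ∈ Dix A φ, φ ∈ Dix A ψ

/-- Positive functionals: `φ(x*x) ≥ 0` for all `x`. -/
def IsPos (φ : A →L[ℂ] ℂ) : Prop := ∀ x : A, 0 ≤ φ (star x * x)

/-- States: positive functionals with `φ(1) = 1`. -/
def IsState (φ : A →L[ℂ] ℂ) : Prop := IsPos A φ ∧ φ 1 = 1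

/-- Tracial functionals: `φ(xy) = φ(yx)`. -/
def IsTracial (φ : A →L[ℂ] ℂ) : Prop := ∀ x y : A, φ (x * y) = φ (y * x)

section

variable {A}

lemma PositiveLinearMap.norm_apply_le [PartialOrder A] [StarOrderedRing A] (f : A →ₚ[ℂ] ℂ)
    (y : A) : ‖f y‖ ≤ ‖f 1‖ * ‖y‖ := by
  have norm_sq (x : A) : ‖f.toPreGNS x‖ ^ 2 = ‖f (star x * x)‖ := by
    simpa only [norm_pow, Complex.norm_real, norm_norm, ofPreGNS_toPreGNS] using
      congrArg norm (f.preGNS_norm_sq (f.toPreGNS x))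
  have cauchySchwarz : ‖f y‖ ^ 2 ≤ ‖f 1‖ * ‖f (star y * y)‖ :=
    calc ‖f y‖ ^ 2 = ‖inner ℂ (f.toPreGNS 1) (f.toPreGNS y)‖ ^ 2 := by
          rw [f.preGNS_inner_def, ofPreGNS_toPreGNS, ofPreGNS_toPreGNS, star_one, one_mul]
      _ ≤ (‖f.toPreGNS 1‖ * ‖f.toPreGNS y‖) ^ 2 := by gcongr; exact norm_inner_le_norm _ _
      _ = ‖f 1‖ * ‖f (star y * y)‖ := by rw [mul_pow, norm_sq, norm_sq, star_one, one_mul]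
  have hyy : ‖f (star y * y)‖ ≤ ‖f 1‖ * ‖y‖ ^ 2 := by
    simpa only [CStarRing.norm_star_mul_self, sq] using
      f.norm_apply_le_of_nonneg _ (star_mul_self_nonneg y)
  refine (pow_le_pow_iff_left₀ (norm_nonneg _) (by positivity) two_ne_zero).mp ?_
  calc ‖f y‖ ^ 2 ≤ ‖f 1‖ * (‖f 1‖ * ‖y‖ ^ 2) := cauchySchwarz.trans (by gcongr)
    _ = (‖f 1‖ * ‖y‖) ^ 2 := by ring

lemma IsPos.map_nonneg [PartialOrder A] [StarOrderedRing A] {φ : A →L[ℂ] ℂ} (hφ : IsPos A φ)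
    {a : A} (ha : 0 ≤ a) : 0 ≤ φ a := by
  rw [StarOrderedRing.nonneg_iff] at ha
  induction ha using AddSubmonoid.closure_induction with
  | mem x hx => obtain ⟨b, rfl⟩ := hx; exact hφ b
  | zero => simp
  | add x y _ _ hx hy => rw [map_add]; exact add_nonneg hx hy

lemma IsPos.norm_le {φ : A →L[ℂ] ℂ} (hφ : IsPos A φ) : ‖φ‖ ≤ ‖φ 1‖ := by
  let := CStarAlgebra.spectralOrder A
  have := CStarAlgebra.spectralOrderedRing A
  exact φ.opNorm_le_bound (norm_nonneg _)
    (PositiveLinearMap.mk₀ φ.toLinearMap fun _ => hφ.map_nonneg).norm_apply_le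

lemma norm_conjF_le {u : A} (hu : u ∈ unitary A) (φ : A →L[ℂ] ℂ) : ‖conjF A u φ‖ ≤ ‖φ‖ :=
  (conjF A u φ).opNorm_le_bound (norm_nonneg φ) fun x =>
    calc ‖φ (u * x * star u)‖ ≤ ‖φ‖ * ‖u * x * star u‖ := φ.le_opNorm _
      _ = ‖φ‖ * ‖x‖ := by
        rw [CStarRing.norm_mul_mem_unitary _ (Unitary.star_mem hu), CStarRing.norm_mem_unitary_mul _ hu]

lemma convexHull_conjF_subset_add_closedBall {V : Set A} (hV : V ⊆ unitary A)
    {φ φ' : A →L[ℂ] ℂ} {ε : ℝ} (hε : ‖φ - φ'‖ ≤ ε) :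
    convexHull ℝ ((fun u => conjF A u φ) '' V) ⊆
      convexHull ℝ ((fun u => conjF A u φ') '' V) + Metric.closedBall 0 ε := by
  refine convexHull_min ?_ ((convex_convexHull ℝ _).add (convex_closedBall 0 ε))
  rintro _ ⟨u, hu, rfl⟩
  have hsplit : conjF A u φ = conjF A u φ' + conjF A u (φ - φ') := by
    simp only [conjF, ← ContinuousLinearMap.add_comp, add_sub_cancel]
  show conjF A u φ ∈ _
  rw [hsplit]
  refine Set.add_mem_add (subset_convexHull ℝ _ ⟨u, hu, rfl⟩) ?_
  rw [mem_closedBall_zero_iff]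
  exact (norm_conjF_le (hV hu) _).trans hε

lemma isClosed_DixF (V : Set A) (φ : A →L[ℂ] ℂ) : IsClosed (DixF A V φ) :=
  isClosed_closure.preimage NormedSpace.Dual.toWeakDual_continuous

lemma exists_mem_DixF_norm_sub_le {V : Set A} (hV : V ⊆ unitary A) {φ φ' ψ : A →L[ℂ] ℂ}
    {ε : ℝ} (hε : ‖φ - φ'‖ ≤ ε) (hψ : ψ ∈ DixF A V φ) : ∃ ψ' ∈ DixF A V φ', ‖ψ - ψ'‖ ≤ ε := by
  set H := convexHull ℝ ((fun u => conjF A u φ') '' V)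
  set K : Set (WeakDual ℂ A) := WeakDual.toStrongDual ⁻¹' Metric.closedBall 0 ε
  -- Banach–Alaoglu: `K` is weak*-compact, so the sum below is weak*-closed.
  have hclosed : IsClosed (closure (StrongDual.toWeakDual '' H) + K) :=
    isClosed_closure.add_right_of_isCompact (WeakDual.isCompact_closedBall 0 ε)
  have hsub : StrongDual.toWeakDual '' convexHull ℝ ((fun u => conjF A u φ) '' V) ⊆
      closure (StrongDual.toWeakDual '' H) + K := by
    rintro _ ⟨w, hw, rfl⟩
    obtain ⟨y, hy, b, hb, rfl⟩ := convexHull_conjF_subset_add_closedBall hV hε hw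
    exact Set.add_mem_add (subset_closure (Set.mem_image_of_mem _ hy)) hb
  obtain ⟨ψ', hψ', k, hk, hsum⟩ := closure_minimal hsub hclosed hψ
  refine ⟨WeakDual.toStrongDual ψ', hψ', ?_⟩
  have hdiff : ψ - WeakDual.toStrongDual ψ' = WeakDual.toStrongDual k :=
    sub_eq_of_eq_add' hsum.symm
  simpa only [hdiff, K, Set.mem_preimage, mem_closedBall_zero_iff] using hk

lemma isClosed_setOf_maxMixed : IsClosed {φ : A →L[ℂ] ℂ | MaxMixed A φ} := by
  refine isClosed_of_closure_subset fun φ hφ ψ hψ => ?_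
  rw [Dix, ← (isClosed_DixF _ ψ).closure_eq, Metric.mem_closure_iff]
  intro ε hε
  obtain ⟨φ', hφ', hφφ'⟩ := Metric.mem_closure_iff.1 hφ (ε / 2) (by positivity)
  rw [dist_eq_norm] at hφφ'
  obtain ⟨ψ', hψ', hψψ'⟩ := exists_mem_DixF_norm_sub_le le_rfl hφφ'.le hψ
  obtain ⟨χ, hχ, hφ'χ⟩ :=
    exists_mem_DixF_norm_sub_le le_rfl (norm_sub_rev ψ ψ' ▸ hψψ') (hφ' ψ' hψ')
  refine ⟨χ, hχ, ?_⟩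
  calc dist φ χ ≤ ‖φ - φ'‖ + ‖φ' - χ‖ := by
        simpa only [dist_eq_norm, sub_add_sub_cancel] using norm_add_le (φ - φ') (φ' - χ)
    _ < ε := by linarith

end

theorem stmt4_general (A : Type*) [CStarAlgebra A] (φ : A →L[ℂ] ℂ)
    (h : ∀ a : A, IsSelfAdjoint a → ∀ ε : ℝ, 0 < ε →
      ∃ φ' : A →L[ℂ] ℂ, MaxMixed A φ' ∧ IsPos A φ' ∧ IsPos A (φ - φ') ∧
        ‖φ a - φ' a‖ < ε) :
    MaxMixed A φ := by
  refine isClosed_setOf_maxMixed.closure_subset (Metric.mem_closure_iff.2 fun ε hε => ?_)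
  obtain ⟨φ', hφ', -, hpos, hclose⟩ := h 1 (.one A) ε hε
  exact ⟨φ', hφ', by rw [dist_eq_norm]; exact hpos.norm_le.trans_lt hclose⟩

/-- Let `A` be a unital C*-algebra and `φ ∈ A*₊`.  If for every
self-adjoint `a ∈ A` and every `ε > 0` there is a maximally mixed `φ' ∈ A*₊` with
`φ - φ'` positive and `|φ(a) - φ'(a)| < ε`, then `φ` is maximally mixed. -/
theorem stmt4 (A : Type*) [CStarAlgebra A] (φ : A →L[ℂ] ℂ) (hφ : IsPos A φ)
    (h : ∀ a : A, IsSelfAdjoint a → ∀ ε : ℝ, 0 < ε →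
      ∃ φ' : A →L[ℂ] ℂ, MaxMixed A φ' ∧ IsPos A φ' ∧ IsPos A (φ - φ') ∧
        ‖φ a - φ' a‖ < ε) :
    MaxMixed A φ :=
  stmt4_general A φ h
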